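/- Let B₃ be the B-spline of order 3 and set B(x) = (B₃(x), B₃(x+1), B₃(x+2))ᵀ and B'(x) = (B₃'(x), B₃'(x+1), B₃'(x+2))ᵀ for x ∈ (0,1). Then the span of {B(x)B(x)ᵀ : x ∈ (0,1)} ∪ {B'(x)B'(x)ᵀ : x ∈ (0,1)} equals the full 6-dimensional space of real symmetric 3×3 matrices. -/
import Mathlib


open Matrix Set

/-- The B-spline of order 3. -/
noncomputable def B3 (x : ℝ) : ℝ :=
  if 0 ≤ x ∧ x < 1 then x ^ 2 / 2
  else if 1 ≤ x ∧ x < 2 then -x ^ 2 + 3 * x - 3 / 2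
  else if 2 ≤ x ∧ x < 3 then x ^ 2 / 2 - 3 * x + 9 / 2
  else 0

/-- The derivative of the B-spline of order 3. -/
noncomputable def B3' (x : ℝ) : ℝ :=
  if 0 ≤ x ∧ x < 1 then x
  else if 1 ≤ x ∧ x < 2 then -2 * x + 3
  else if 2 ≤ x ∧ x < 3 then x - 3
  else 0

noncomputable def Bvec (x : ℝ) : Fin 3 → ℝ := ![B3 x, B3 (x + 1), B3 (x + 2)]

noncomputable def Bvec' (x : ℝ) : Fin 3 → ℝ := ![B3' x, B3' (x + 1), B3' (x + 2)]

/-- The space of real symmetric `n × n` matrices, as a submodule. -/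
def symmSub (n : ℕ) : Submodule ℝ (Matrix (Fin n) (Fin n) ℝ) where
  carrier := {A | A.IsSymm}
  add_mem' := fun ha hb => Matrix.IsSymm.add ha hb
  zero_mem' := by simp [Matrix.IsSymm]
  smul_mem' := fun c A hA => by
    simpa [Matrix.IsSymm, Matrix.transpose_smul] using congrArg (c • ·) hA

lemma Bvec_14 : Bvec (1/4) = ![1/32, 11/16, 9/32] := by
  funext i; fin_cases i <;> norm_num [Bvec, B3]

lemma Bvec_12 : Bvec (1/2) = ![1/8, 3/4, 1/8] := by
  funext i; fin_cases i <;> norm_num [Bvec, B3]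

lemma Bvec_34 : Bvec (3/4) = ![9/32, 11/16, 1/32] := by
  funext i; fin_cases i <;> norm_num [Bvec, B3]

lemma Bvec'_14 : Bvec' (1/4) = ![1/4, 1/2, -3/4] := by
  funext i; fin_cases i <;> norm_num [Bvec', B3']

lemma Bvec'_12 : Bvec' (1/2) = ![1/2, 0, -1/2] := by
  funext i; fin_cases i <;> norm_num [Bvec', B3']

lemma Bvec'_34 : Bvec' (3/4) = ![3/4, -1/2, -1/4] := by
  funext i; fin_cases i <;> norm_num [Bvec', B3']

set_option maxHeartbeats 1000000 in
theorem stmt_11 :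
    Submodule.span ℝ
      ({A : Matrix (Fin 3) (Fin 3) ℝ |
          ∃ x ∈ Set.Ioo (0 : ℝ) 1, A = Matrix.vecMulVec (Bvec x) (Bvec x)} ∪
       {A : Matrix (Fin 3) (Fin 3) ℝ |
          ∃ x ∈ Set.Ioo (0 : ℝ) 1, A = Matrix.vecMulVec (Bvec' x) (Bvec' x)}) =
    symmSub 3 := by
  set S : Set (Matrix (Fin 3) (Fin 3) ℝ) :=
      ({A : Matrix (Fin 3) (Fin 3) ℝ |
          ∃ x ∈ Set.Ioo (0 : ℝ) 1, A = Matrix.vecMulVec (Bvec x) (Bvec x)} ∪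
       {A : Matrix (Fin 3) (Fin 3) ℝ |
          ∃ x ∈ Set.Ioo (0 : ℝ) 1, A = Matrix.vecMulVec (Bvec' x) (Bvec' x)}) with hS
  apply le_antisymm
  · rw [Submodule.span_le]
    rintro A (⟨x, hx, rfl⟩ | ⟨x, hx, rfl⟩) <;>
    · show Matrix.IsSymm _
      unfold Matrix.IsSymm
      ext i j
      simp [Matrix.vecMulVec_apply, mul_comm]
  · intro A hA
    have hsymm : A.IsSymm := hA
    have h10 : A 1 0 = A 0 1 := hsymm.apply 0 1
    have h20 : A 2 0 = A 0 2 := hsymm.apply 0 2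
    have h21 : A 2 1 = A 1 2 := hsymm.apply 1 2
    have hmemB : ∀ x : ℝ, x ∈ Set.Ioo (0:ℝ) 1 →
        Matrix.vecMulVec (Bvec x) (Bvec x) ∈ Submodule.span ℝ S := by
      intro x hx
      exact Submodule.subset_span (Or.inl ⟨x, hx, rfl⟩)
    have hmemB' : ∀ x : ℝ, x ∈ Set.Ioo (0:ℝ) 1 →
        Matrix.vecMulVec (Bvec' x) (Bvec' x) ∈ Submodule.span ℝ S := by
      intro x hx
      exact Submodule.subset_span (Or.inr ⟨x, hx, rfl⟩)
    have h14 : (1/4 : ℝ) ∈ Set.Ioo (0:ℝ) 1 := by norm_num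
    have h12 : (1/2 : ℝ) ∈ Set.Ioo (0:ℝ) 1 := by norm_num
    have h34 : (3/4 : ℝ) ∈ Set.Ioo (0:ℝ) 1 := by norm_num
    have key : A =
        (4*(A 0 0) - 2*(A 1 1) + 8*(A 2 2) + 2*(A 0 1) + 12*(A 0 2) + 6*(A 1 2)) •
          Matrix.vecMulVec (Bvec (1/4)) (Bvec (1/4)) +
        (-11*(A 0 0) + 5*(A 1 1) - 11*(A 2 2) - 6*(A 0 1) - 22*(A 0 2) - 6*(A 1 2)) •
          Matrix.vecMulVec (Bvec (1/2)) (Bvec (1/2)) +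
        (8*(A 0 0) - 2*(A 1 1) + 4*(A 2 2) + 6*(A 0 1) + 12*(A 0 2) + 2*(A 1 2)) •
          Matrix.vecMulVec (Bvec (3/4)) (Bvec (3/4)) +
        ((11/32)*(A 0 0) + (5/32)*(A 1 1) + (55/32)*(A 2 2) - (1/2)*(A 0 1) + (33/16)*(A 0 2) - (9/8)*(A 1 2)) •
          Matrix.vecMulVec (Bvec' (1/4)) (Bvec' (1/4)) +
        (-(29/16)*(A 0 0) - (1/16)*(A 1 1) - (29/16)*(A 2 2) + (9/8)*(A 0 1) - (61/8)*(A 0 2) + (9/8)*(A 1 2)) •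
          Matrix.vecMulVec (Bvec' (1/2)) (Bvec' (1/2)) +
        ((55/32)*(A 0 0) + (5/32)*(A 1 1) + (11/32)*(A 2 2) - (9/8)*(A 0 1) + (33/16)*(A 0 2) - (1/2)*(A 1 2)) •
          Matrix.vecMulVec (Bvec' (3/4)) (Bvec' (3/4)) := by
      rw [Bvec_14, Bvec_12, Bvec_34, Bvec'_14, Bvec'_12, Bvec'_34]
      ext i j
      fin_cases i <;> fin_cases j <;>
        simp only [Matrix.add_apply, Matrix.smul_apply, Matrix.vecMulVec_apply,
          smul_eq_mul, Fin.zero_eta, Fin.mk_one, Fin.isValue,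
          Matrix.cons_val_zero, Matrix.cons_val_one,
          Matrix.head_cons, Matrix.cons_val_two, Matrix.tail_cons,
          show ((⟨2, by norm_num⟩ : Fin 3) = 2) from rfl] <;>
        first
          | ring1
          | linear_combination h10
          | linear_combination h20
          | linear_combination h21
    rw [key]
    exact Submodule.add_mem _ (Submodule.add_mem _ (Submodule.add_mem _
      (Submodule.add_mem _ (Submodule.add_mem _
        (Submodule.smul_mem _ _ (hmemB _ h14)) (Submodule.smul_mem _ _ (hmemB _ h12)))
        (Submodule.smul_mem _ _ (hmemB _ h34)))
      (Submodule.smul_mem _ _ (hmemB' _ h14)))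
      (Submodule.smul_mem _ _ (hmemB' _ h12)))
      (Submodule.smul_mem _ _ (hmemB' _ h34))
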